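/- arXiv:2304.01954 — 2 statements merged into one kernel-verified Lean document; each statement's English description precedes it below -/
import Mathlib

section
/- Let ε ∈ (0,1) and let Δ be an integer with Δ ≥ 7/ε². Let d ≥ 1 and q' be integers with γ := q' − d ≥ εΔ and q' ≤ 2Δ. Let p_1, …, p_d ∈ [0, 1/γ]^{q'} be subdistributions, let g = g(p_1, …, p_d) be the coloring tree recursion output, and for each i define J_i := diag(1 − g)^{-1} · (√g √g^T − I) · diag(√(p_i ⊙ g)). Then sup over nonzero (x_1, …, x_d) of ‖Σ_{i=1}^d J_i x_i‖₂ / max_i ‖x_i‖₂ is at most exp(−ε/4). -/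
open Finset

/-- The coloring tree recursion:
`g_c(p_1, …, p_d) = Π_i (1 − p_i(c)) / Σ_b Π_i (1 − p_i(b))`. -/
noncomputable def colorRec {q d : ℕ} (p : Fin d → Fin q → ℝ) (c : Fin q) : ℝ :=
  (∏ i, (1 - p i c)) / (∑ b, ∏ i, (1 - p i b))

/-- Euclidean norm of a vector in `ℝ^q`. -/
noncomputable def eucNorm {q : ℕ} (v : Fin q → ℝ) : ℝ := Real.sqrt (∑ c, v c ^ 2)

/-- The `i`-th Jacobian block of the message recursion:
`J_i = diag(1 − g)⁻¹ · (√g √gᵀ − I) · diag(√(p_i ⊙ g))`. -/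
noncomputable def Jmat {q d : ℕ} (p : Fin d → Fin q → ℝ) (i : Fin d) :
    Matrix (Fin q) (Fin q) ℝ :=
  Matrix.diagonal (fun c => (1 - colorRec p c)⁻¹) *
    (Matrix.vecMulVec (fun c => Real.sqrt (colorRec p c))
        (fun c => Real.sqrt (colorRec p c)) - 1) *
    Matrix.diagonal (fun c => Real.sqrt (p i c * colorRec p c))

open Real Matrix

/-! Write `g = colorRec p`, `y c = ∑ i, √(p i c) * x i c` and `m = ∑ c, g c * y c`. The
`c`-th entry of `∑ i, J i (x i)` is `(1 - g c)⁻¹ * √(g c) * (m - y c)`. As `g` is a probability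
vector, the variance bound and Cauchy–Schwarz give
`‖∑ i, J i (x i)‖² ≤ (1 - β)⁻² * max_c (g c * ∑ i, p i c) * d * M²`, where `β = 1 / (q' - d)`
bounds `g c`. The numerator of `g c` is at most `exp (-∑ i, p i c)`, so times `∑ i, p i c` it is
at most `exp (-1)`; the denominator is at least `q' * exp (-(d / q') / (1 - β))`, by
`exp (-t / (1 - β)) ≤ 1 - t` for `0 ≤ t ≤ β` and Jensen's inequality for `exp`. What remains,
`(1 - β)⁻² * (d / q') * exp ((d / q') / (1 - β) - 1)`, is at most `exp (-ε / 2)` because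
`d / q' ≤ 1 - ε / 2` and `β ≤ ε / 7`. -/

lemma one_sub_sum_le_prod_one_sub {ι : Type*} (s : Finset ι) {f : ι → ℝ}
    (h0 : ∀ i ∈ s, 0 ≤ f i) (h1 : ∀ i ∈ s, f i ≤ 1) :
    1 - ∑ i ∈ s, f i ≤ ∏ i ∈ s, (1 - f i) := by
  induction s using Finset.cons_induction with
  | empty => simp
  | cons a s _ ih =>
    rw [prod_cons, sum_cons]
    have hprod := ih (fun i hi => h0 i (mem_cons_of_mem hi)) fun i hi => h1 i (mem_cons_of_mem hi)
    have hs : 0 ≤ ∑ i ∈ s, f i := sum_nonneg fun i hi => h0 i (mem_cons_of_mem hi)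
    nlinarith [h0 a (mem_cons_self a s), h1 a (mem_cons_self a s)]

lemma prod_one_sub_le_exp_neg_sum {ι : Type*} (s : Finset ι) {f : ι → ℝ}
    (h1 : ∀ i ∈ s, f i ≤ 1) : ∏ i ∈ s, (1 - f i) ≤ exp (-∑ i ∈ s, f i) := by
  rw [← sum_neg_distrib, exp_sum]
  exact prod_le_prod (fun i hi => sub_nonneg.2 (h1 i hi)) fun i _ => one_sub_le_exp_neg _

lemma exp_neg_div_one_sub_le_one_sub {t β : ℝ} (ht : 0 ≤ t) (htβ : t ≤ β) (hβ : β < 1) :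
    exp (-(t / (1 - β))) ≤ 1 - t := by
  have ht1 : 0 < 1 - t := by linarith
  calc exp (-(t / (1 - β))) ≤ exp (1 - (1 - t)⁻¹) := by
        gcongr
        rw [show 1 - (1 - t)⁻¹ = -(t / (1 - t)) by field_simp; ring, neg_le_neg_iff]
        gcongr
    _ ≤ exp (log (1 - t)) := exp_le_exp.2 (one_sub_inv_le_log_of_pos ht1)
    _ = 1 - t := exp_log ht1

lemma card_mul_exp_mean_le_sum_exp {ι : Type*} {s : Finset ι} (hs : s.Nonempty) (f : ι → ℝ) :
    #s * exp ((∑ i ∈ s, f i) / #s) ≤ ∑ i ∈ s, exp (f i) := by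
  have hcard : (0 : ℝ) < #s := by exact_mod_cast hs.card_pos
  have hjensen := convexOn_exp.map_sum_le (t := s) (w := fun _ => (#s : ℝ)⁻¹) (p := f)
    (fun _ _ => by positivity) (by simp [hcard.ne']) (fun _ _ => Set.mem_univ _)
  simp only [smul_eq_mul, ← mul_sum] at hjensen
  rw [inv_mul_eq_div, inv_mul_eq_div, le_div_iff₀ hcard] at hjensen
  linarith

lemma sum_mul_sub_sq_le_sum_mul_sq {ι : Type*} (s : Finset ι) {w : ι → ℝ}
    (hw : ∑ i ∈ s, w i = 1) (y : ι → ℝ) :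
    ∑ i ∈ s, w i * (∑ j ∈ s, w j * y j - y i) ^ 2 ≤ ∑ i ∈ s, w i * y i ^ 2 := by
  set m := ∑ j ∈ s, w j * y j
  have hexpand : ∑ i ∈ s, w i * (m - y i) ^ 2 = ∑ i ∈ s, w i * y i ^ 2 - m ^ 2 := by
    have : ∀ i ∈ s, w i * (m - y i) ^ 2 = m ^ 2 * w i - 2 * m * (w i * y i) + w i * y i ^ 2 :=
      fun i _ => by ring
    rw [sum_congr rfl this, sum_add_distrib, sum_sub_distrib, ← mul_sum, ← mul_sum, hw]
    ring
  rw [hexpand]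
  nlinarith [sq_nonneg m]

section ColorRec

variable {q d : ℕ} {p : Fin d → Fin q → ℝ}

lemma sub_le_sum_prod_one_sub (h0 : ∀ i c, 0 ≤ p i c) (h1 : ∀ i c, p i c ≤ 1)
    (hsub : ∀ i, ∑ c, p i c ≤ 1) : (q : ℝ) - d ≤ ∑ b, ∏ i, (1 - p i b) :=
  calc (q : ℝ) - d ≤ ∑ b, (1 - ∑ i, p i b) := by
        have : ∑ i, ∑ b, p i b ≤ d := (sum_le_sum fun i _ => hsub i).trans (by simp)
        rw [sum_sub_distrib, sum_comm]
        simp only [sum_const, card_univ, Fintype.card_fin, nsmul_eq_mul, mul_one]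
        linarith
    _ ≤ ∑ b, ∏ i, (1 - p i b) := sum_le_sum fun b _ =>
        one_sub_sum_le_prod_one_sub _ (fun i _ => h0 i b) fun i _ => h1 i b

lemma colorRec_nonneg (h1 : ∀ i c, p i c ≤ 1) (c : Fin q) : 0 ≤ colorRec p c :=
  div_nonneg (prod_nonneg fun i _ => sub_nonneg.2 (h1 i c))
    (sum_nonneg fun b _ => prod_nonneg fun i _ => sub_nonneg.2 (h1 i b))

lemma colorRec_le_one_div (h0 : ∀ i c, 0 ≤ p i c) (h1 : ∀ i c, p i c ≤ 1)
    (hsub : ∀ i, ∑ c, p i c ≤ 1) (hdq : (d : ℝ) < q) (c : Fin q) :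
    colorRec p c ≤ 1 / ((q : ℝ) - d) :=
  div_le_div₀ zero_le_one
    (prod_le_one (fun i _ => sub_nonneg.2 (h1 i c)) fun i _ => sub_le_self _ (h0 i c))
    (sub_pos.2 hdq) (sub_le_sum_prod_one_sub h0 h1 hsub)

lemma sum_colorRec (hD : ∑ b, ∏ i, (1 - p i b) ≠ 0) : ∑ c, colorRec p c = 1 := by
  simp only [colorRec]
  rw [← sum_div, div_self hD]

lemma card_mul_exp_le_sum_prod_one_sub {β : ℝ} (h0 : ∀ i c, 0 ≤ p i c)
    (hβ : ∀ i c, p i c ≤ β) (hβ1 : β < 1) (hsub : ∀ i, ∑ c, p i c ≤ 1) (hq : 0 < q) :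
    q * exp (-(d / q / (1 - β))) ≤ ∑ b, ∏ i, (1 - p i b) := by
  have hS : ∑ b, ∑ i, p i b ≤ d := by
    rw [sum_comm]
    exact (sum_le_sum fun i _ => hsub i).trans (by simp)
  have hmean : -(d / q / (1 - β)) ≤ (∑ b, ∑ i, -(p i b / (1 - β))) / q := by
    rw [div_right_comm, ← neg_div]
    simp only [sum_neg_distrib, ← sum_div]
    gcongr
  calc (q : ℝ) * exp (-(d / q / (1 - β)))
      ≤ q * exp ((∑ b, ∑ i, -(p i b / (1 - β))) / q) := by gcongr
    _ ≤ ∑ b, exp (∑ i, -(p i b / (1 - β))) := by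
        simpa using card_mul_exp_mean_le_sum_exp ⟨⟨0, hq⟩, mem_univ _⟩
          fun b => ∑ i, -(p i b / (1 - β))
    _ ≤ ∑ b, ∏ i, (1 - p i b) := sum_le_sum fun b _ => by
        rw [exp_sum]
        exact prod_le_prod (fun i _ => (exp_pos _).le)
          fun i _ => exp_neg_div_one_sub_le_one_sub (h0 i b) (hβ i b) hβ1

lemma colorRec_mul_sum_le {β : ℝ} (h0 : ∀ i c, 0 ≤ p i c)
    (hβ : ∀ i c, p i c ≤ β) (hβ1 : β < 1) (hsub : ∀ i, ∑ c, p i c ≤ 1) (hq : 0 < q)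
    (c : Fin q) : colorRec p c * ∑ i, p i c ≤ exp (d / q / (1 - β) - 1) / q := by
  have h1 : ∀ i c, p i c ≤ 1 := fun i c => (hβ i c).trans hβ1.le
  have hnum : (∏ i, (1 - p i c)) * ∑ i, p i c ≤ exp (-1) :=
    calc (∏ i, (1 - p i c)) * ∑ i, p i c ≤ exp (-∑ i, p i c) * ∑ i, p i c :=
          mul_le_mul_of_nonneg_right (prod_one_sub_le_exp_neg_sum _ fun i _ => h1 i c)
            (sum_nonneg fun i _ => h0 i c)
      _ ≤ exp (-1) := by rw [mul_comm]; exact mul_exp_neg_le_exp_neg_one _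
  calc colorRec p c * ∑ i, p i c
      = (∏ i, (1 - p i c)) * (∑ i, p i c) / ∑ b, ∏ i, (1 - p i b) := div_mul_eq_mul_div _ _ _
    _ ≤ exp (-1) / (q * exp (-(d / q / (1 - β)))) :=
        div_le_div₀ (exp_pos _).le hnum (by positivity)
          (card_mul_exp_le_sum_prod_one_sub h0 hβ hβ1 hsub hq)
    _ = exp (d / q / (1 - β) - 1) / q := by
        rw [exp_sub, exp_neg, exp_neg]
        field_simp

lemma Jmat_mulVec_apply (h0 : ∀ i c, 0 ≤ p i c) (hg : ∀ c, 0 ≤ colorRec p c) (i : Fin d)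
    (v : Fin q → ℝ) (c : Fin q) :
    (Jmat p i *ᵥ v) c = (1 - colorRec p c)⁻¹ * √(colorRec p c) *
      (∑ b, colorRec p b * (√(p i b) * v b) - √(p i c) * v c) := by
  simp only [Jmat, Matrix.mulVec, dotProduct, Matrix.mul_diagonal, Matrix.diagonal_mul,
    Matrix.sub_apply, Matrix.vecMulVec_apply, Matrix.one_apply, sqrt_mul (h0 _ _)]
  simp only [sub_mul, mul_sub, sum_sub_distrib, ite_mul, zero_mul, mul_ite, mul_zero,
    sum_ite_eq, mem_univ, if_true, mul_sum]
  congr 1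
  · refine sum_congr rfl fun b _ => ?_
    linear_combination (1 - colorRec p c)⁻¹ * √(colorRec p c) * √(p i b) * v b *
      mul_self_sqrt (hg b)
  · ring

lemma sum_sq_sum_Jmat_mulVec_le {β K : ℝ} (h0 : ∀ i c, 0 ≤ p i c) (hg : ∀ c, 0 ≤ colorRec p c)
    (hgβ : ∀ c, colorRec p c ≤ β) (hβ : β < 1) (hsum : ∑ c, colorRec p c = 1)
    (hK : ∀ c, colorRec p c * ∑ i, p i c ≤ K) (x : Fin d → Fin q → ℝ) :
    ∑ c, (∑ i, (Jmat p i *ᵥ x i) c) ^ 2 ≤ (1 - β)⁻¹ ^ 2 * (K * ∑ i, ∑ c, x i c ^ 2) := by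
  set g := colorRec p
  set y : Fin q → ℝ := fun c => ∑ i, √(p i c) * x i c
  have hsum_apply : ∀ c, ∑ i, (Jmat p i *ᵥ x i) c =
      (1 - g c)⁻¹ * √(g c) * (∑ b, g b * y b - y c) := fun c => by
    have hmean : ∑ i, ∑ b, g b * (√(p i b) * x i b) = ∑ b, g b * y b := by
      rw [sum_comm]
      simp only [y, mul_sum]
    rw [sum_congr rfl fun i _ => Jmat_mulVec_apply h0 hg i (x i) c, ← mul_sum, sum_sub_distrib,
      hmean]
  have hinv : ∀ c, (1 - g c)⁻¹ ^ 2 ≤ (1 - β)⁻¹ ^ 2 := fun c => by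
    have hgc := hgβ c
    exact pow_le_pow_left₀ (inv_nonneg.2 (by linarith)) (inv_anti₀ (by linarith) (by linarith)) 2
  have hcs : ∀ c, y c ^ 2 ≤ (∑ i, p i c) * ∑ i, x i c ^ 2 := fun c =>
    sum_sq_le_sum_mul_sum_of_sq_le_mul _ (fun i _ => h0 i c) (fun i _ => sq_nonneg _)
      fun i _ => by rw [mul_pow, sq_sqrt (h0 i c)]
  calc ∑ c, (∑ i, (Jmat p i *ᵥ x i) c) ^ 2
      = ∑ c, (1 - g c)⁻¹ ^ 2 * (g c * (∑ b, g b * y b - y c) ^ 2) := by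
        refine sum_congr rfl fun c _ => ?_
        rw [hsum_apply, mul_pow, mul_pow, sq_sqrt (hg c)]
        ring
    _ ≤ ∑ c, (1 - β)⁻¹ ^ 2 * (g c * (∑ b, g b * y b - y c) ^ 2) :=
        sum_le_sum fun c _ =>
          mul_le_mul_of_nonneg_right (hinv c) (mul_nonneg (hg c) (sq_nonneg _))
    _ ≤ (1 - β)⁻¹ ^ 2 * ∑ c, g c * y c ^ 2 := by
        rw [← mul_sum]
        exact mul_le_mul_of_nonneg_left (sum_mul_sub_sq_le_sum_mul_sq _ hsum y) (sq_nonneg _)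
    _ ≤ (1 - β)⁻¹ ^ 2 * ∑ c, K * ∑ i, x i c ^ 2 := by
        refine mul_le_mul_of_nonneg_left (sum_le_sum fun c _ => ?_) (sq_nonneg _)
        calc g c * y c ^ 2 ≤ g c * ((∑ i, p i c) * ∑ i, x i c ^ 2) :=
              mul_le_mul_of_nonneg_left (hcs c) (hg c)
          _ ≤ K * ∑ i, x i c ^ 2 := by
              rw [← mul_assoc]
              exact mul_le_mul_of_nonneg_right (hK c) (sum_nonneg fun i _ => sq_nonneg _)
    _ = (1 - β)⁻¹ ^ 2 * (K * ∑ i, ∑ c, x i c ^ 2) := by rw [← mul_sum, sum_comm]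

lemma sum_sq_sum_Jmat_mulVec_le_exp (h0 : ∀ i c, 0 ≤ p i c)
    (hB : ∀ i c, p i c ≤ 1 / ((q : ℝ) - d)) (hsub : ∀ i, ∑ c, p i c ≤ 1) (hdq : (d : ℝ) + 1 < q)
    (x : Fin d → Fin q → ℝ) :
    ∑ c, (∑ i, (Jmat p i *ᵥ x i) c) ^ 2 ≤ (1 - 1 / ((q : ℝ) - d))⁻¹ ^ 2 *
      (exp (d / q / (1 - 1 / ((q : ℝ) - d)) - 1) / q * ∑ i, ∑ c, x i c ^ 2) := by
  have hβ1 : 1 / ((q : ℝ) - d) < 1 := by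
    rw [div_lt_one (by linarith)]
    linarith
  have h1 : ∀ i c, p i c ≤ 1 := fun i c => (hB i c).trans hβ1.le
  have hdq' : (d : ℝ) < q := by linarith
  have hq : 0 < q := by exact_mod_cast (Nat.cast_nonneg d).trans_lt hdq'
  have hD : ∑ b, ∏ i, (1 - p i b) ≠ 0 :=
    ((sub_pos.2 hdq').trans_le (sub_le_sum_prod_one_sub h0 h1 hsub)).ne'
  exact sum_sq_sum_Jmat_mulVec_le h0 (colorRec_nonneg h1) (colorRec_le_one_div h0 h1 hsub hdq')
    hβ1 (sum_colorRec hD) (colorRec_mul_sum_le h0 hB hβ1 hsub hq) x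

lemma sum_sum_sq_le_of_eucNorm_le {x : Fin d → Fin q → ℝ} {M : ℝ}
    (hM : ∀ i, eucNorm (x i) ≤ M) : ∑ i, ∑ c, x i c ^ 2 ≤ d * M ^ 2 :=
  calc ∑ i, ∑ c, x i c ^ 2 ≤ ∑ _i : Fin d, M ^ 2 :=
        sum_le_sum fun i _ => (sqrt_le_left ((sqrt_nonneg _).trans (hM i))).1 (hM i)
    _ = d * M ^ 2 := by simp

end ColorRec

lemma seven_div_le_of_mul_le {ε Δ γ : ℝ} (hε : 0 < ε) (hΔ : 7 / ε ^ 2 ≤ Δ)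
    (hγ : ε * Δ ≤ γ) : 7 / ε ≤ γ :=
  calc 7 / ε = ε * (7 / ε ^ 2) := by field_simp
    _ ≤ ε * Δ := by gcongr
    _ ≤ γ := hγ

lemma div_le_one_sub_half {ε Δ d q : ℝ} (hε : 0 ≤ ε) (hq : 0 < q) (hγ : ε * Δ ≤ q - d)
    (hqΔ : q ≤ 2 * Δ) : d / q ≤ 1 - ε / 2 := by
  rw [div_le_iff₀ hq]
  nlinarith

lemma sq_inv_one_sub_mul_exp_le {ε β r : ℝ} (hε : ε < 1) (hβ0 : 0 ≤ β) (hβ : β ≤ ε / 7)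
    (hr0 : 0 ≤ r) (hr : r ≤ 1 - ε / 2) :
    (1 - β)⁻¹ ^ 2 * (r * exp (r / (1 - β) - 1)) ≤ exp (-(ε / 2)) := by
  have hβ1 : 0 < 1 - β := by linarith
  set a := (1 - β)⁻¹ with ha_def
  have ha1 : 1 ≤ a := one_le_inv₀ hβ1 |>.2 (by linarith)
  have ha : a - 1 ≤ ε / 6 := by
    rw [ha_def, inv_eq_one_div, div_sub_one hβ1.ne', div_le_iff₀ hβ1]
    nlinarith
  have hexponent : r / (1 - β) - 1 ≤ a - 1 - ε / 2 := by
    rw [div_eq_mul_inv, ← ha_def]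
    nlinarith
  calc a ^ 2 * (r * exp (r / (1 - β) - 1))
      ≤ exp (a - 1) ^ 2 * (exp (-(ε / 2)) * exp (a - 1 - ε / 2)) := by
        gcongr
        · linarith [add_one_le_exp (a - 1)]
        · linarith [add_one_le_exp (-(ε / 2))]
    _ = exp (3 * (a - 1) - ε) := by
        rw [sq, ← exp_add, ← exp_add, ← exp_add]
        ring_nf
    _ ≤ exp (-(ε / 2)) := by
        gcongr
        linarith

/-- Jacobian contraction with rate `exp(−ε/4)` in the regime `q = (1+ε)Δ`, `Δ ≥ 7/ε²`:
after reduction, a vertex has `d` free children and `q'` available colors with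
`q' − d ≥ εΔ` and `q' ≤ 2Δ`. -/
theorem jacobian_contraction_eps (ε : ℝ) (hε0 : 0 < ε) (hε1 : ε < 1)
    (Δ : ℕ) (hΔ : 7 / ε ^ 2 ≤ (Δ : ℝ))
    (d q' : ℕ) (hd : 1 ≤ d)
    (hγ : ε * (Δ : ℝ) ≤ (q' : ℝ) - d) (hq' : (q' : ℝ) ≤ 2 * (Δ : ℝ))
    (p : Fin d → Fin q' → ℝ)
    (h0 : ∀ i c, 0 ≤ p i c) (hB : ∀ i c, p i c ≤ 1 / ((q' : ℝ) - d))
    (hsub : ∀ i, ∑ c, p i c ≤ 1) :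
    ∀ x : Fin d → Fin q' → ℝ,
      eucNorm (fun c => ∑ i, (Jmat p i).mulVec (x i) c) ≤
        Real.exp (-(ε / 4)) *
          (Finset.univ.sup' ⟨⟨0, hd⟩, Finset.mem_univ _⟩ fun i => eucNorm (x i)) := by
  intro x
  set M := univ.sup' ⟨⟨0, hd⟩, mem_univ _⟩ fun i => eucNorm (x i)
  have hxM : ∀ i, eucNorm (x i) ≤ M := fun i => le_sup' (fun j => eucNorm (x j)) (mem_univ i)
  have hM0 : 0 ≤ M := (sqrt_nonneg _).trans (hxM ⟨0, hd⟩)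
  have hγ7 : 7 / ε ≤ (q' : ℝ) - d := seven_div_le_of_mul_le hε0 hΔ hγ
  have h7ε : 7 < 7 / ε := by rwa [lt_div_iff₀ hε0, mul_lt_iff_lt_one_right (by norm_num)]
  have hβ : 1 / ((q' : ℝ) - d) ≤ ε / 7 := by
    rw [one_div_le (by linarith) (by positivity), one_div_div]
    exact hγ7
  have hr : (d : ℝ) / q' ≤ 1 - ε / 2 := div_le_one_sub_half hε0.le (by linarith) hγ hq'
  have hJ := sum_sq_sum_Jmat_mulVec_le_exp h0 hB hsub (by linarith) x
  set β := 1 / ((q' : ℝ) - d)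
  refine (sqrt_le_left (by positivity)).2 ?_
  calc ∑ c, (∑ i, (Jmat p i *ᵥ x i) c) ^ 2
      ≤ (1 - β)⁻¹ ^ 2 * (exp (d / q' / (1 - β) - 1) / q' * ∑ i, ∑ c, x i c ^ 2) := hJ
    _ ≤ (1 - β)⁻¹ ^ 2 * (exp (d / q' / (1 - β) - 1) / q' * (d * M ^ 2)) := by
        gcongr
        exact sum_sum_sq_le_of_eucNorm_le hxM
    _ = (1 - β)⁻¹ ^ 2 * (d / q' * exp (d / q' / (1 - β) - 1)) * M ^ 2 := by ring
    _ ≤ exp (-(ε / 2)) * M ^ 2 := by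
        gcongr
        exact sq_inv_one_sub_mul_exp_le hε1 (one_div_nonneg.2 (by linarith)) hβ (by positivity) hr
    _ = (exp (-(ε / 4)) * M) ^ 2 := by
        rw [mul_pow, ← exp_nat_mul]
        ring_nf
end

section
/- Let γ ≥ 2 be a real number, let d ≥ 0 and q ≥ 1 be integers, and for each i ∈ [d] let d_i ≥ 0 and q_i be integers with q_i ≥ d_i + γ and q_i ≤ q. Define ξ_i := (1 + 1/(γ−1))^{γ d_i/(q_i−1)}. Let p_1, …, p_d ∈ [0,1]^q be subdistributions with all entries of p_i at most ξ_i/(q_i − 1 + ξ_i). Then for every color c ∈ [q], g_c(p_1, …, p_d) · Σ_{i=1}^d p_i(c) ≤ (1/(e·q)) · exp((1/q) Σ_{i=1}^d ((q_i − 1)/ξ_i + 1)·ln(1 + ξ_i/(q_i − 1))), where g is the coloring tree recursion. -/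
open Finset

/-- `ξ_γ(d', q') = (1 + 1/(γ−1))^(γd'/(q'−1))`. -/
noncomputable def xiGen (γ : ℝ) (d' q' : ℕ) : ℝ :=
  (1 + 1 / (γ - 1)) ^ ((γ * (d' : ℝ)) / ((q' : ℝ) - 1))

open Real

-- The convex function `t ↦ (1 - B) ^ t` lies below its chord on `[0, 1]`.
lemma one_sub_rpow_div_le_one_sub {x B : ℝ} (hx : 0 ≤ x) (hxB : x ≤ B) (hB1 : B < 1) :
    (1 - B) ^ (x / B) ≤ 1 - x := by
  obtain hB0 | rfl := (hx.trans hxB).lt_or_eq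
  · have ht1 : x / B ≤ 1 := (div_le_one hB0).2 hxB
    have hchord := (convexOn_rpow_left (sub_pos.2 hB1)).2 (Set.mem_univ 0) (Set.mem_univ 1)
      (sub_nonneg.2 ht1) (div_nonneg hx hB0.le) (by ring)
    simp only [smul_eq_mul, mul_zero, zero_add, mul_one, rpow_zero, rpow_one] at hchord
    calc (1 - B) ^ (x / B) ≤ 1 - x / B + x / B * (1 - B) := hchord
      _ = 1 - x := by field_simp; ring
  · simp [le_antisymm hxB hx]

lemma prod_one_sub_mul_sum_le_exp_neg_one {ι : Type*} (s : Finset ι) (x : ι → ℝ)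
    (h0 : ∀ i ∈ s, 0 ≤ x i) (h1 : ∀ i ∈ s, x i ≤ 1) :
    (∏ i ∈ s, (1 - x i)) * ∑ i ∈ s, x i ≤ exp (-1) := by
  have hprod : ∏ i ∈ s, (1 - x i) ≤ exp (-∑ i ∈ s, x i) := by
    rw [← sum_neg_distrib, exp_sum]
    exact prod_le_prod (fun i hi => by linarith [h1 i hi]) fun i _ => one_sub_le_exp_neg _
  calc (∏ i ∈ s, (1 - x i)) * ∑ i ∈ s, x i ≤ exp (-∑ i ∈ s, x i) * ∑ i ∈ s, x i :=
        mul_le_mul_of_nonneg_right hprod (sum_nonneg h0)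
    _ ≤ exp (-1) := by rw [mul_comm]; exact mul_exp_neg_le_exp_neg_one _

lemma one_sub_rpow_one_div_le_prod_one_sub {ι : Type*} (s : Finset ι) {B : ℝ} (hB0 : 0 < B)
    (hB1 : B < 1) (p : ι → ℝ) (h0 : ∀ b ∈ s, 0 ≤ p b) (hB : ∀ b ∈ s, p b ≤ B)
    (hsum : ∑ b ∈ s, p b ≤ 1) :
    (1 - B) ^ (1 / B) ≤ ∏ b ∈ s, (1 - p b) := by
  have h1B : 0 < 1 - B := by linarith
  calc (1 - B) ^ (1 / B) ≤ (1 - B) ^ ((∑ b ∈ s, p b) / B) :=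
        rpow_le_rpow_of_exponent_ge h1B (by linarith)
          (div_le_div_of_nonneg_right hsum hB0.le)
    _ = ∏ b ∈ s, (1 - B) ^ (p b / B) := by rw [sum_div, rpow_sum_of_pos h1B]
    _ ≤ ∏ b ∈ s, (1 - p b) :=
        prod_le_prod (fun b _ => (rpow_pos_of_pos h1B _).le)
          fun b hb => one_sub_rpow_div_le_one_sub (h0 b hb) (hB b hb) hB1

lemma exp_neg_mul_log_le_prod_one_sub {ι : Type*} (s : Finset ι) {m ξ : ℝ} (hm : 0 < m)
    (hξ : 0 < ξ) (p : ι → ℝ) (h0 : ∀ b ∈ s, 0 ≤ p b)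
    (hB : ∀ b ∈ s, p b ≤ ξ / (m + ξ))
    (hsum : ∑ b ∈ s, p b ≤ 1) :
    exp (-((m / ξ + 1) * log (1 + ξ / m))) ≤ ∏ b ∈ s, (1 - p b) := by
  have hbase : 1 - ξ / (m + ξ) = (1 + ξ / m)⁻¹ := by field_simp; ring
  have hexp : 1 / (ξ / (m + ξ)) = m / ξ + 1 := by field_simp
  have hbound := one_sub_rpow_one_div_le_prod_one_sub s (by positivity)
    ((div_lt_one (by positivity)).2 (by linarith)) p h0 hB hsum
  rwa [hbase, hexp, rpow_def_of_pos (by positivity), log_inv, neg_mul, mul_comm] at hbound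

lemma card_mul_exp_le_sum_prod {ι κ : Type*} [Fintype ι] [Fintype κ] [Nonempty κ]
    (X : ι → κ → ℝ) (a : ι → ℝ) (hX0 : ∀ i b, 0 ≤ X i b)
    (ha : ∀ i, exp (-a i) ≤ ∏ b, X i b) :
    (Fintype.card κ : ℝ) * exp (-(1 / Fintype.card κ) * ∑ i, a i) ≤
      ∑ b, ∏ i, X i b := by
  set n : ℝ := (Fintype.card κ : ℝ)
  have hn : 0 < n := Nat.cast_pos.2 Fintype.card_pos
  have hprod : exp (-∑ i, a i) ≤ ∏ b, ∏ i, X i b := by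
    rw [prod_comm, ← sum_neg_distrib, exp_sum]
    exact prod_le_prod (fun i _ => (exp_pos _).le) fun i _ => ha i
  have hamgm := geom_mean_le_arith_mean univ (fun _ => (1 : ℝ)) (fun b => ∏ i, X i b)
    (fun _ _ => zero_le_one) (by simpa using Fintype.card_pos)
    fun b _ => prod_nonneg fun i _ => hX0 i b
  simp only [rpow_one, sum_const, card_univ, nsmul_eq_mul, mul_one, one_mul] at hamgm
  have hroot : exp (-(1 / n) * ∑ i, a i) ≤ (∏ b, ∏ i, X i b) ^ n⁻¹ := by
    rw [show -(1 / n) * ∑ i, a i = (-∑ i, a i) * n⁻¹ by ring, exp_mul]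
    exact rpow_le_rpow (exp_pos _).le hprod (by positivity)
  calc n * exp (-(1 / n) * ∑ i, a i) ≤ n * ((∑ b, ∏ i, X i b) / n) :=
        mul_le_mul_of_nonneg_left (hroot.trans hamgm) hn.le
    _ = ∑ b, ∏ i, X i b := by field_simp

theorem amortized_marginal_bound_general (γ : ℝ) (hγ : 2 ≤ γ) (d q : ℕ)
    (dc qc : Fin d → ℕ)
    (hqi : ∀ i, (dc i : ℝ) + γ ≤ (qc i : ℝ))
    (p : Fin d → Fin q → ℝ)
    (h0 : ∀ i c, 0 ≤ p i c)
    (hB : ∀ i c, p i c ≤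
      xiGen γ (dc i) (qc i) / ((qc i : ℝ) - 1 + xiGen γ (dc i) (qc i)))
    (hsub : ∀ i, ∑ c, p i c ≤ 1) :
    ∀ c, colorRec p c * ∑ i, p i c ≤
      (1 / (Real.exp 1 * (q : ℝ))) *
        Real.exp ((1 / (q : ℝ)) * ∑ i,
          (((qc i : ℝ) - 1) / xiGen γ (dc i) (qc i) + 1) *
            Real.log (1 + xiGen γ (dc i) (qc i) / ((qc i : ℝ) - 1))) := by
  intro c
  have : Nonempty (Fin q) := ⟨c⟩
  have hq : (0 : ℝ) < q := Nat.cast_pos.2 c.pos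
  have hm : ∀ i, 0 < (qc i : ℝ) - 1 := fun i => by
    linarith [hqi i, (dc i).cast_nonneg (α := ℝ)]
  have hξ : ∀ i, 0 < xiGen γ (dc i) (qc i) := fun i =>
    rpow_pos_of_pos (add_pos one_pos (one_div_pos.2 (by linarith))) _
  have hp1 : ∀ i b, p i b ≤ 1 := fun i b =>
    (single_le_sum (fun b _ => h0 i b) (mem_univ b)).trans (hsub i)
  have hden := card_mul_exp_le_sum_prod (fun i b => 1 - p i b) _
    (fun i b => sub_nonneg.2 (hp1 i b))
    fun i => exp_neg_mul_log_le_prod_one_sub univ (hm i) (hξ i) (p i) (fun b _ => h0 i b)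
      (fun b _ => hB i b) (hsub i)
  have hnum := prod_one_sub_mul_sum_le_exp_neg_one univ (fun i => p i c) (fun i _ => h0 i c)
    fun i _ => hp1 i c
  rw [Fintype.card_fin] at hden
  rw [colorRec, div_mul_eq_mul_div]
  calc _ ≤ exp (-1) / (q * exp (-(1 / q) * _)) :=
        div_le_div₀ (exp_pos _).le hnum (by positivity) hden
    _ = _ := by rw [exp_neg, neg_mul, exp_neg]; field_simp

/-- Amortized marginal bound: if each child `i` has parameters `(d_i, q_i)` with
`q_i ≥ d_i + γ`, `q_i ≤ q`, and `p_i` has entries at most `ξ_i/(q_i − 1 + ξ_i)`, then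
`g_c · Σ_i p_i(c) ≤ (1/(e·q))·exp((1/q) Σ_i ((q_i−1)/ξ_i + 1)·ln(1 + ξ_i/(q_i−1)))`. -/
theorem amortized_marginal_bound (γ : ℝ) (hγ : 2 ≤ γ) (d q : ℕ) (hq : 1 ≤ q)
    (dc qc : Fin d → ℕ)
    (hqi : ∀ i, (dc i : ℝ) + γ ≤ (qc i : ℝ)) (hqiq : ∀ i, qc i ≤ q)
    (p : Fin d → Fin q → ℝ)
    (h0 : ∀ i c, 0 ≤ p i c)
    (hB : ∀ i c, p i c ≤
      xiGen γ (dc i) (qc i) / ((qc i : ℝ) - 1 + xiGen γ (dc i) (qc i)))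
    (hsub : ∀ i, ∑ c, p i c ≤ 1) :
    ∀ c, colorRec p c * ∑ i, p i c ≤
      (1 / (Real.exp 1 * (q : ℝ))) *
        Real.exp ((1 / (q : ℝ)) * ∑ i,
          (((qc i : ℝ) - 1) / xiGen γ (dc i) (qc i) + 1) *
            Real.log (1 + xiGen γ (dc i) (qc i) / ((qc i : ℝ) - 1))) :=
  amortized_marginal_bound_general γ hγ d q dc qc hqi p h0 hB hsub
end
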